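/- Let n ≥ 2 be an integer, let X₁, …, Xₙ be smooth real-valued functions on the upper half-space {x ∈ ℝⁿ : xₙ > 0}, and let λ ∈ ℝ. Suppose that on the upper half-space: for every k ∈ {1, …, n}, ∂ₖXₖ − Xₙ/xₙ = λ + (n−1), and for all j ≠ k, ∂ⱼXₖ + ∂ₖXⱼ = 0. Then λ = 1 − n, and consequently the vector field X = ΣₖXₖ∂ₖ is a Killing field of the hyperbolic metric (i.e. ∂ₖXₖ − Xₙ/xₙ = 0 for every k). -/

import Mathlib

open Set

/-- Partial derivative in the `i`-th coordinate direction. -/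
noncomputable def pd {m : ℕ} (i : Fin m) (f : (Fin m → ℝ) → ℝ) (x : Fin m → ℝ) : ℝ :=
  deriv (fun t => f (Function.update x i t)) (x i)

/-- Partial derivative via `fderiv`. -/
noncomputable def D {m : ℕ} (i : Fin m) (f : (Fin m → ℝ) → ℝ) (y : Fin m → ℝ) : ℝ :=
  fderiv ℝ f y (Pi.single i 1)

section aux
variable {m : ℕ}

lemma hasDerivAt_update' (x : Fin m → ℝ) (i : Fin m) (t : ℝ) :
    HasDerivAt (fun s : ℝ => Function.update x i s) (Pi.single i 1) t := by
  have h : (fun s : ℝ => Function.update x i s)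
      = fun s : ℝ => x + (s - x i) • (Pi.single i 1 : Fin m → ℝ) := by
    funext s; funext j
    by_cases hj : j = i
    · subst hj; simp
    · simp [Function.update_of_ne hj, Pi.single_apply, hj]
  rw [h]
  simpa using (((hasDerivAt_id t).sub_const (x i)).smul_const ((Pi.single i 1 : Fin m → ℝ))).const_add x

lemma hasDerivAt_slice {f : (Fin m → ℝ) → ℝ} {x : Fin m → ℝ} (i : Fin m)
    (hf : DifferentiableAt ℝ f x) :
    HasDerivAt (fun t => f (Function.update x i t)) (D i f x) (x i) := by
  have hu := hasDerivAt_update' x i (x i)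
  have hf' : HasFDerivAt f (fderiv ℝ f x) (Function.update x i (x i)) := by
    rw [Function.update_eq_self]; exact hf.hasFDerivAt
  exact hf'.comp_hasDerivAt (x i) hu

lemma pd_eq_D {f : (Fin m → ℝ) → ℝ} {x : Fin m → ℝ} (i : Fin m)
    (hf : DifferentiableAt ℝ f x) : pd i f x = D i f x :=
  (hasDerivAt_slice i hf).deriv

lemma pd_const_add (i : Fin m) (c : ℝ) (f : (Fin m → ℝ) → ℝ) (x : Fin m → ℝ) :
    pd i (fun y => c + f y) x = pd i f x := by
  simp only [pd, deriv_const_add]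

lemma pd_div_coord {f : (Fin m → ℝ) → ℝ} {x : Fin m → ℝ} {i N : Fin m} (hiN : i ≠ N)
    (hf : DifferentiableAt ℝ f x) :
    pd i (fun y => f y / y N) x = D i f x / x N := by
  have h : (fun t => f (Function.update x i t) / (Function.update x i t) N)
      = fun t => f (Function.update x i t) / x N := by
    funext t; rw [Function.update_of_ne (Ne.symm hiN)]
  show deriv (fun t => f (Function.update x i t) / (Function.update x i t) N) (x i) = _
  rw [h]
  exact ((hasDerivAt_slice i hf).div_const (x N)).deriv

lemma pd_div_coord_self {f : (Fin m → ℝ) → ℝ} {x : Fin m → ℝ} {N : Fin m} (hxN : x N ≠ 0)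
    (hf : DifferentiableAt ℝ f x) :
    pd N (fun y => f y / y N) x = (D N f x * x N - f x) / (x N) ^ 2 := by
  have h : (fun t => f (Function.update x N t) / (Function.update x N t) N)
      = fun t => f (Function.update x N t) / t := by
    funext t; rw [Function.update_self]
  show deriv (fun t => f (Function.update x N t) / (Function.update x N t) N) (x N) = _
  rw [h]
  simpa [Pi.div_def] using ((hasDerivAt_slice N hf).div (hasDerivAt_id (x N)) hxN).deriv

lemma pd_const_div_coord {x : Fin m → ℝ} {N : Fin m} (a : ℝ) (hxN : x N ≠ 0) :
    pd N (fun y => a / y N) x = -a / (x N) ^ 2 := by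
  have h : (fun t => a / (Function.update x N t) N) = fun t => a / t := by
    funext t; rw [Function.update_self]
  show deriv (fun t => a / (Function.update x N t) N) (x N) = _
  rw [h]
  have := ((hasDerivAt_const (x N) a).div (hasDerivAt_id (x N)) hxN).deriv
  simpa [Pi.div_def] using this

lemma contDiffOn_D {S : Set (Fin m → ℝ)} (hS : IsOpen S) {f : (Fin m → ℝ) → ℝ}
    (hf : ContDiffOn ℝ (⊤ : ℕ∞) f S) (i : Fin m) : ContDiffOn ℝ (⊤ : ℕ∞) (D i f) S :=
  (hf.fderiv_of_isOpen hS (by simp)).clm_apply contDiffOn_const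

lemma D_symm {S : Set (Fin m → ℝ)} (hS : IsOpen S) {f : (Fin m → ℝ) → ℝ}
    (hf : ContDiffOn ℝ (⊤ : ℕ∞) f S) {x : Fin m → ℝ} (hx : x ∈ S) (i j : Fin m) :
    D i (D j f) x = D j (D i f) x := by
  have hca : ContDiffAt ℝ (⊤ : ℕ∞) f x := hf.contDiffAt (hS.mem_nhds hx)
  have hsym := hca.isSymmSndFDerivAt (by rw [minSmoothness_of_isRCLikeNormedField]; exact WithTop.coe_le_coe.mpr le_top)
  have hdf : DifferentiableAt ℝ (fderiv ℝ f) x :=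
    ((hf.fderiv_of_isOpen (m := 1) hS (WithTop.coe_le_coe.mpr le_top)).contDiffAt (hS.mem_nhds hx)).differentiableAt one_ne_zero
  have key : ∀ v w : Fin m → ℝ,
      fderiv ℝ (fun y => fderiv ℝ f y w) x v = fderiv ℝ (fderiv ℝ f) x v w := by
    intro v w
    rw [fderiv_clm_apply hdf (differentiableAt_const w)]
    simp
  unfold D
  rw [key, key, hsym]

lemma D_congr {S : Set (Fin m → ℝ)} (hS : IsOpen S) {u v : (Fin m → ℝ) → ℝ}
    (h : EqOn u v S) {x : Fin m → ℝ} (hx : x ∈ S) (i : Fin m) :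
    D i u x = D i v x := by
  unfold D
  rw [(Filter.eventuallyEq_of_mem (hS.mem_nhds hx) h).fderiv_eq]

lemma D_neg (i : Fin m) (g : (Fin m → ℝ) → ℝ) (x : Fin m → ℝ) :
    D i (fun y => -(g y)) x = -(D i g x) := by
  unfold D
  rw [fderiv_fun_neg]
  simp

end aux

/-- Ricci soliton case of Theorem 3.11: if `(ℍⁿ, ds², X, λ)` is a Ricci
soliton, then `λ = 1 - n` and `X` is Killing. -/
theorem stmt_11 (n : ℕ) (hn : 2 ≤ n) (X : Fin n → (Fin n → ℝ) → ℝ) (lam : ℝ)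
    (hX : ∀ k : Fin n, ContDiffOn ℝ (⊤ : ℕ∞) (X k) {x : Fin n → ℝ | 0 < x ⟨n - 1, by omega⟩})
    (h1 : ∀ k : Fin n, ∀ x : Fin n → ℝ, 0 < x ⟨n - 1, by omega⟩ →
      pd k (X k) x - X ⟨n - 1, by omega⟩ x / x ⟨n - 1, by omega⟩ = lam + ((n : ℝ) - 1))
    (h2 : ∀ j k : Fin n, j ≠ k → ∀ x : Fin n → ℝ, 0 < x ⟨n - 1, by omega⟩ →
      pd j (X k) x + pd k (X j) x = 0) :
    lam = 1 - (n : ℝ) ∧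
    ∀ k : Fin n, ∀ x : Fin n → ℝ, 0 < x ⟨n - 1, by omega⟩ →
      pd k (X k) x - X ⟨n - 1, by omega⟩ x / x ⟨n - 1, by omega⟩ = 0 := by
  have hNlt : n - 1 < n := by omega
  set N : Fin n := ⟨n - 1, hNlt⟩ with hNdef
  set c : ℝ := lam + ((n : ℝ) - 1) with hc
  set S : Set (Fin n → ℝ) := {x | 0 < x N} with hSdef
  have hS : IsOpen S := isOpen_lt continuous_const (continuous_apply N)
  -- restate the hypotheses with `N` and `S`
  have hX' : ∀ k : Fin n, ContDiffOn ℝ (⊤ : ℕ∞) (X k) S := hX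
  have h1' : ∀ k : Fin n, ∀ x ∈ S, pd k (X k) x - X N x / x N = c := h1
  have h2' : ∀ j k : Fin n, j ≠ k → ∀ x ∈ S, pd j (X k) x + pd k (X j) x = 0 := h2
  set k : Fin n := ⟨0, by omega⟩ with hkdef
  have hkN : k ≠ N := by
    simp only [hkdef, hNdef, ne_eq, Fin.mk.injEq]
    omega
  have hXd : ∀ (j : Fin n), ∀ x ∈ S, DifferentiableAt ℝ (X j) x := fun j x hx =>
    ((hX' j).contDiffAt (hS.mem_nhds hx)).differentiableAt (by simp)
  have hcoord : ∀ x : Fin n → ℝ, DifferentiableAt ℝ (fun y : Fin n → ℝ => y N) x := fun x =>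
    (ContinuousLinearMap.proj (R := ℝ) (φ := fun _ : Fin n => ℝ) N).differentiableAt
  -- h1 in `D` form
  have E2 : ∀ j : Fin n, EqOn (D j (X j)) (fun y => c + X N y / y N) S := by
    intro j x hx
    have h := h1' j x hx
    rw [pd_eq_D j (hXd j x hx)] at h
    simp only
    linarith
  -- the function y ↦ c + X N y / y N is differentiable on S
  have hqd : ∀ x ∈ S, DifferentiableAt ℝ (fun y => c + X N y / y N) x := by
    intro x hx
    have hxN : x N ≠ 0 := ne_of_gt hx
    simp only [div_eq_mul_inv]
    exact ((hXd N x hx).mul ((hcoord x).inv hxN)).const_add c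
  -- h2 in `D` form: D k (X N) = -(D N (X k)) on S
  have E1 : EqOn (D k (X N)) (fun y => -(D N (X k) y)) S := by
    intro x hx
    have h := h2' k N hkN x hx
    rw [pd_eq_D k (hXd N x hx), pd_eq_D N (hXd k x hx)] at h
    simp only
    linarith
  -- key identity (★): D k (D k (X N)) = -c / x N on S
  have E3 : EqOn (D k (D k (X N))) (fun y => -c / y N) S := by
    intro x hx
    have hxN : x N ≠ 0 := ne_of_gt hx
    have s1 : D k (D k (X N)) x = D k (fun y => -(D N (X k) y)) x := D_congr hS E1 hx k
    have s2 : D k (fun y => -(D N (X k) y)) x = -(D k (D N (X k)) x) := D_neg k _ x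
    have s3 : D k (D N (X k)) x = D N (D k (X k)) x := D_symm hS (hX' k) hx k N
    have s4 : D N (D k (X k)) x = D N (fun y => c + X N y / y N) x := D_congr hS (E2 k) hx N
    have s5 : D N (fun y => c + X N y / y N) x = pd N (fun y => c + X N y / y N) x :=
      (pd_eq_D N (hqd x hx)).symm
    have s6 : pd N (fun y => c + X N y / y N) x = pd N (fun y => X N y / y N) x :=
      pd_const_add N c _ x
    have s7 : pd N (fun y => X N y / y N) x = (D N (X N) x * x N - X N x) / (x N) ^ 2 :=
      pd_div_coord_self hxN (hXd N x hx)
    have s8 : D N (X N) x = c + X N x / x N := E2 N hx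
    show D k (D k (X N)) x = -c / x N
    rw [s1, s2, s3, s4, s5, s6, s7, s8]
    field_simp
    ring
  -- second key identity: D N (D k (X N)) = D k (X N) y / y N on S
  have E4 : EqOn (D N (D k (X N))) (fun y => D k (X N) y / y N) S := by
    intro x hx
    have s1 : D N (D k (X N)) x = D k (D N (X N)) x := D_symm hS (hX' N) hx N k
    have s2 : D k (D N (X N)) x = D k (fun y => c + X N y / y N) x := D_congr hS (E2 N) hx k
    have s3 : D k (fun y => c + X N y / y N) x = pd k (fun y => c + X N y / y N) x :=
      (pd_eq_D k (hqd x hx)).symm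
    have s4 : pd k (fun y => c + X N y / y N) x = pd k (fun y => X N y / y N) x :=
      pd_const_add k c _ x
    have s5 : pd k (fun y => X N y / y N) x = D k (X N) x / x N :=
      pd_div_coord hkN (hXd N x hx)
    show D N (D k (X N)) x = D k (X N) x / x N
    rw [s1, s2, s3, s4, s5]
  -- evaluate at the point (1,...,1) to conclude c = 0
  have hB : ContDiffOn ℝ (⊤ : ℕ∞) (D k (X N)) S := contDiffOn_D hS (hX' N) k
  have hBd : ∀ x ∈ S, DifferentiableAt ℝ (D k (X N)) x := fun x hx =>
    (hB.contDiffAt (hS.mem_nhds hx)).differentiableAt (by simp)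
  set x₀ : Fin n → ℝ := fun _ => 1 with hx₀def
  have hx₀ : x₀ ∈ S := by simp [hSdef, hx₀def]
  have hx₀N : x₀ N ≠ 0 := one_ne_zero
  have lhs : D N (D k (D k (X N))) x₀ = c := by
    have s1 : D N (D k (D k (X N))) x₀ = D N (fun y => -c / y N) x₀ := D_congr hS E3 hx₀ N
    have hd : DifferentiableAt ℝ (fun y : Fin n → ℝ => -c / y N) x₀ := by
      simp only [div_eq_mul_inv]
      exact (differentiableAt_const (-c)).mul ((hcoord x₀).inv hx₀N)
    have s2 : D N (fun y => -c / y N) x₀ = pd N (fun y => -c / y N) x₀ := (pd_eq_D N hd).symm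
    have s3 : pd N (fun y => -c / y N) x₀ = -(-c) / (x₀ N) ^ 2 :=
      pd_const_div_coord (-c) hx₀N
    rw [s1, s2, s3]
    show - -c / (1 : ℝ) ^ 2 = c
    norm_num
  have rhs : D N (D k (D k (X N))) x₀ = -c := by
    have s1 : D N (D k (D k (X N))) x₀ = D k (D N (D k (X N))) x₀ := D_symm hS hB hx₀ N k
    have s2 : D k (D N (D k (X N))) x₀ = D k (fun y => D k (X N) y / y N) x₀ :=
      D_congr hS E4 hx₀ k
    have hd : DifferentiableAt ℝ (fun y => D k (X N) y / y N) x₀ := by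
      simp only [div_eq_mul_inv]
      exact (hBd x₀ hx₀).mul ((hcoord x₀).inv hx₀N)
    have s3 : D k (fun y => D k (X N) y / y N) x₀ = pd k (fun y => D k (X N) y / y N) x₀ :=
      (pd_eq_D k hd).symm
    have s4 : pd k (fun y => D k (X N) y / y N) x₀ = D k (D k (X N)) x₀ / x₀ N :=
      pd_div_coord hkN (hBd x₀ hx₀)
    have s5 : D k (D k (X N)) x₀ = -c / x₀ N := E3 hx₀
    rw [s1, s2, s3, s4, s5]
    show -c / (1 : ℝ) / (1 : ℝ) = -c
    norm_num
  have hc0 : c = 0 := by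
    have := lhs.symm.trans rhs
    linarith
  constructor
  · rw [hc] at hc0; linarith
  · intro j x hx
    have h := h1' j x hx
    rw [hc0] at h
    exact h
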